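/- arXiv:2509.00606 — 2 statements merged into one kernel-verified Lean document; each statement's English description precedes it below -/
import Mathlib

section
/- Let γ : (0,∞) → ℝ² be the curve γ(t) = (t cos(e^{1/t}), t sin(e^{1/t})), and let Q(t) = cross(γ′(t), γ′′(t))/‖γ′(t)‖³, where cross(u,w) = u₁w₂ − u₂w₁. Then the function ℝ → ℝ defined by t ↦ Q(t) + 1/t for t > 0 and by 0 for t ≤ 0 is infinitely differentiable. -/
/-- The spiral `γ(t) = (t cos(e^{1/t}), t sin(e^{1/t}))`. -/
noncomputable def spiral : ℝ → ℝ × ℝ :=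
  fun t => (t * Real.cos (Real.exp (1 / t)), t * Real.sin (Real.exp (1 / t)))

/-- The planar cross product `cross(u, w) = u₁w₂ - u₂w₁`. -/
def planarCross (u w : ℝ × ℝ) : ℝ := u.1 * w.2 - u.2 * w.1

/-- The Euclidean norm on `ℝ²`. -/
noncomputable def euclNorm (u : ℝ × ℝ) : ℝ := Real.sqrt (u.1 ^ 2 + u.2 ^ 2)

/-- The signed curvature density `Q(t) = cross(γ'(t), γ''(t)) / ‖γ'(t)‖³`. -/
noncomputable def spiralQ (t : ℝ) : ℝ :=
  planarCross (deriv spiral t) (deriv (deriv spiral) t) / (euclNorm (deriv spiral t)) ^ 3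

/-! With `u = e^{-1/t}` (Mathlib's `expNegInvGlue`, which is flat at `0`) and `ρ = √(1 + t²u²)`,
a direct computation gives `Q(t) = (t u² - 1) / (t ρ³)` for `t > 0`. Hence
`Q + 1/t = u²/ρ³ + (ρ³ - 1)/(t ρ³)`, and since `ρ³ - 1 = (ρ² - 1)(ρ² + ρ + 1)/(ρ + 1)` with
`ρ² - 1 = t²u²`, the singular factor `1/t` cancels: `Q + 1/t = u² (1 + t (ρ² + ρ + 1)/(ρ + 1)) / ρ³`,
a smooth function of `t` that vanishes for `t ≤ 0`. -/

open Real
open scoped ContDiff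

noncomputable def spiralVelocity (t : ℝ) : ℝ × ℝ :=
  (cos (exp (1 / t)) + exp (1 / t) * sin (exp (1 / t)) / t,
   sin (exp (1 / t)) - exp (1 / t) * cos (exp (1 / t)) / t)

noncomputable def spiralAcceleration (t : ℝ) : ℝ × ℝ :=
  (-(exp (1 / t) * sin (exp (1 / t)) + exp (1 / t) ^ 2 * cos (exp (1 / t))) / t ^ 3,
   (exp (1 / t) * cos (exp (1 / t)) - exp (1 / t) ^ 2 * sin (exp (1 / t))) / t ^ 3)

lemma hasDerivAt_exp_one_div {t : ℝ} (ht : t ≠ 0) :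
    HasDerivAt (fun s => exp (1 / s)) (-(exp (1 / t) / t ^ 2)) t := by
  simpa [one_div, div_eq_mul_inv, mul_comm] using (hasDerivAt_inv ht).exp

lemma hasDerivAt_spiral {t : ℝ} (ht : t ≠ 0) : HasDerivAt spiral (spiralVelocity t) t := by
  have hθ := hasDerivAt_exp_one_div ht
  refine ((hasDerivAt_id t).mul hθ.cos).prodMk ((hasDerivAt_id t).mul hθ.sin) |>.congr_deriv ?_
  simp only [spiralVelocity, id, Prod.mk.injEq]
  constructor <;> field_simp
  ring

lemma hasDerivAt_spiralVelocity {t : ℝ} (ht : t ≠ 0) :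
    HasDerivAt spiralVelocity (spiralAcceleration t) t := by
  have hθ := hasDerivAt_exp_one_div ht
  refine (hθ.cos.add ((hθ.mul hθ.sin).div (hasDerivAt_id t) ht)).prodMk
    (hθ.sin.sub ((hθ.mul hθ.cos).div (hasDerivAt_id t) ht)) |>.congr_deriv ?_
  simp only [spiralAcceleration, id, Pi.mul_apply, Prod.mk.injEq]
  constructor <;> field_simp <;> ring

lemma deriv_deriv_spiral {t : ℝ} (ht : t ≠ 0) :
    deriv (deriv spiral) t = spiralAcceleration t := by
  have hv : deriv spiral =ᶠ[nhds t] spiralVelocity :=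
    Filter.mem_of_superset (isOpen_ne.mem_nhds ht) fun _ hs => (hasDerivAt_spiral hs).deriv
  rw [hv.deriv_eq, (hasDerivAt_spiralVelocity ht).deriv]

lemma planarCross_spiralVelocity_spiralAcceleration {t : ℝ} (ht : t ≠ 0) :
    planarCross (spiralVelocity t) (spiralAcceleration t) =
      exp (1 / t) * (t - exp (1 / t) ^ 2) / t ^ 4 := by
  simp only [planarCross, spiralVelocity, spiralAcceleration]
  field_simp
  linear_combination (t - exp (1 / t) ^ 2) * sin_sq_add_cos_sq (exp (1 / t))

lemma euclNorm_spiralVelocity {t : ℝ} (ht : 0 < t) :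
    euclNorm (spiralVelocity t) = √(t ^ 2 + exp (1 / t) ^ 2) / t := by
  have hsq : (spiralVelocity t).1 ^ 2 + (spiralVelocity t).2 ^ 2 =
      (t ^ 2 + exp (1 / t) ^ 2) / t ^ 2 := by
    simp only [spiralVelocity]
    field_simp
    linear_combination (t ^ 2 + exp (1 / t) ^ 2) * sin_sq_add_cos_sq (exp (1 / t))
  rw [euclNorm, hsq, sqrt_div' _ (sq_nonneg t), sqrt_sq ht.le]

lemma exp_one_div_eq_inv_expNegInvGlue {t : ℝ} (ht : 0 < t) :
    exp (1 / t) = (expNegInvGlue t)⁻¹ := by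
  rw [expNegInvGlue, if_neg ht.not_ge, ← exp_neg, one_div, neg_neg]

-- `ρ t = t e^{-1/t} ‖γ'(t)‖`
noncomputable def spiralRho (t : ℝ) : ℝ := √(1 + t ^ 2 * expNegInvGlue t ^ 2)

lemma spiralRho_pos (t : ℝ) : 0 < spiralRho t := sqrt_pos.2 (by positivity)

lemma spiralQ_eq {t : ℝ} (ht : 0 < t) :
    spiralQ t = (t * expNegInvGlue t ^ 2 - 1) / (t * spiralRho t ^ 3) := by
  have hu := expNegInvGlue.pos_of_pos ht
  have hsqrt : √(t ^ 2 + exp (1 / t) ^ 2) = spiralRho t * exp (1 / t) := by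
    rw [spiralRho, ← sqrt_sq (exp_pos _).le, ← sqrt_mul (by positivity), sqrt_sq (exp_pos _).le,
      exp_one_div_eq_inv_expNegInvGlue ht]
    congr 1
    field_simp
    ring
  rw [spiralQ, (hasDerivAt_spiral ht.ne').deriv, deriv_deriv_spiral ht.ne',
    planarCross_spiralVelocity_spiralAcceleration ht.ne', euclNorm_spiralVelocity ht, hsqrt,
    exp_one_div_eq_inv_expNegInvGlue ht]
  field_simp

noncomputable def spiralQAddInv (t : ℝ) : ℝ :=
  expNegInvGlue t ^ 2 * (1 + t * (spiralRho t ^ 2 + spiralRho t + 1) / (spiralRho t + 1)) /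
    spiralRho t ^ 3

lemma contDiff_spiralRho : ContDiff ℝ ∞ spiralRho :=
  have : ContDiff ℝ ∞ expNegInvGlue := expNegInvGlue.contDiff
  ContDiff.sqrt (by fun_prop) fun t => (by positivity : (0 : ℝ) < 1 + t ^ 2 * expNegInvGlue t ^ 2).ne'

lemma contDiff_spiralQAddInv : ContDiff ℝ ∞ spiralQAddInv := by
  have hρ := contDiff_spiralRho
  have hρ1 : ∀ t, spiralRho t + 1 ≠ 0 := fun t => (add_pos (spiralRho_pos t) one_pos).ne'
  exact ((expNegInvGlue.contDiff.pow 2).mul (contDiff_const.add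
    ((contDiff_id.mul (((hρ.pow 2).add hρ).add contDiff_const)).div (hρ.add contDiff_const) hρ1))).div
    (hρ.pow 3) fun t => pow_ne_zero 3 (spiralRho_pos t).ne'

lemma spiralQAddInv_of_nonpos {t : ℝ} (ht : t ≤ 0) : spiralQAddInv t = 0 := by
  simp [spiralQAddInv, expNegInvGlue.zero_of_nonpos ht]

lemma spiralQ_add_inv_eq {t : ℝ} (ht : 0 < t) : spiralQ t + 1 / t = spiralQAddInv t := by
  have hρ := spiralRho_pos t
  have hρsq : spiralRho t ^ 2 = 1 + t ^ 2 * expNegInvGlue t ^ 2 := sq_sqrt (by positivity)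
  rw [spiralQ_eq ht, spiralQAddInv]
  field_simp
  linear_combination (spiralRho t ^ 2 + spiralRho t + 1) * hρsq

/-- The function equal to `Q(t) + 1/t` for `t > 0` and to `0` for `t ≤ 0` is infinitely
differentiable. -/
theorem stmt_8 (G : ℝ → ℝ) (hG : ∀ t : ℝ, G t = if 0 < t then spiralQ t + 1 / t else 0) :
    ContDiff ℝ (⊤ : ℕ∞) G := by
  have hG_eq : G = spiralQAddInv := funext fun t => by
    rw [hG]
    split_ifs with ht
    · exact spiralQ_add_inv_eq ht
    · exact (spiralQAddInv_of_nonpos (not_lt.1 ht)).symm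
  exact hG_eq ▸ contDiff_spiralQAddInv
end

section
/- Let γ : (0,∞) → ℝ² be the curve γ(t) = (t cos(e^{1/t}), t sin(e^{1/t})), let cross(u,w) = u₁w₂ − u₂w₁, let Q(t) = cross(γ′(t), γ′′(t))/‖γ′(t)‖³, and for p ≠ 0 let M̂_p u = (⟨Jp,u⟩ p + ⟨p,u⟩ Jp)/‖p‖² with Jp = (−y,x) for p=(x,y). Then there exists a function k : ℝ → ℝ which is infinitely differentiable with k(t) = 0 for all t ≤ 0, such that for every t ∈ (0,1]: Q′(t) = k(t) · cross(γ′(t), M̂_{γ(t)} γ′(t)) / ‖γ′(t)‖. -/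
/-- The Euclidean inner product on `ℝ²`. -/
def euclDot (u w : ℝ × ℝ) : ℝ := u.1 * w.1 + u.2 * w.2

/-- Rotation by `π/2`: `J(x, y) = (-y, x)`. -/
def rotJ (p : ℝ × ℝ) : ℝ × ℝ := (-p.2, p.1)

/-- The endomorphism `M̂_p u = (⟨Jp, u⟩ p + ⟨p, u⟩ Jp)/‖p‖²` associated to the symmetric
tensor `M = 2r dr dφ`. -/
noncomputable def Mhat (p u : ℝ × ℝ) : ℝ × ℝ :=
  (1 / (euclNorm p) ^ 2) • (euclDot (rotJ p) u • p + euclDot p u • rotJ p)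

open Real Set Filter Topology

/-! The spiral is `γ = t e_r(θ)` with `θ = e^{1/t}`. In the rotating frame `(e_r, e_θ)`
everything is explicit: `γ' = e_r - (θ/t) e_θ`, and `M̂_γ` swaps the two frame components, so
`cross(γ', M̂γ') = 1 - (θ/t)²` and `‖γ'‖ = √(1 + (θ/t)²)`; also `Q = F/√g³` with
`F = θ(t - θ²)/t⁴` and `g = 1 + (θ/t)²`. Hence `k = Q'‖γ'‖/cross(γ', M̂γ')` is a
rational function of `t` and `θ`, and in terms of `e^{-1/t} = 1/θ` it is `e^{-1/t}/t` times
a function that stays smooth as `t → 0⁺`, so `k` extends by `0` to a flat smooth function.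
Its denominator vanishes where `t = e^{1/t}` (beyond `t = 1`), which a cutoff removes. -/

/-- The vector with components `(a, b)` in the polar frame `(e_r, e_θ)` at angle `φ`. -/
noncomputable def polarVec (φ a b : ℝ) : ℝ × ℝ :=
  (a * cos φ - b * sin φ, a * sin φ + b * cos φ)

section PolarFrame

variable {φ : ℝ}

theorem planarCross_polarVec (a b c d : ℝ) :
    planarCross (polarVec φ a b) (polarVec φ c d) = a * d - b * c := by
  simp only [planarCross, polarVec]
  linear_combination (a * d - b * c) * sin_sq_add_cos_sq φ

theorem euclNorm_polarVec (a b : ℝ) : euclNorm (polarVec φ a b) = √(a ^ 2 + b ^ 2) := by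
  simp only [euclNorm, polarVec]
  congr 1
  linear_combination (a ^ 2 + b ^ 2) * sin_sq_add_cos_sq φ

theorem euclDot_polarVec (a b c d : ℝ) :
    euclDot (polarVec φ a b) (polarVec φ c d) = a * c + b * d := by
  simp only [euclDot, polarVec]
  linear_combination (a * c + b * d) * sin_sq_add_cos_sq φ

theorem rotJ_polarVec (a b : ℝ) : rotJ (polarVec φ a b) = polarVec φ (-b) a := by
  simp only [rotJ, polarVec, Prod.mk.injEq]
  constructor <;> ring

theorem Mhat_polarVec {r : ℝ} (hr : r ≠ 0) (a b : ℝ) :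
    Mhat (polarVec φ r 0) (polarVec φ a b) = polarVec φ b a := by
  have hnorm : euclNorm (polarVec φ r 0) ^ 2 = r ^ 2 := by
    rw [euclNorm_polarVec, sq_sqrt (by positivity)]
    ring
  rw [Mhat, hnorm, rotJ_polarVec, euclDot_polarVec, euclDot_polarVec]
  simp only [polarVec, Prod.smul_mk, Prod.mk_add_mk, smul_eq_mul, Prod.mk.injEq]
  constructor <;> field_simp <;> ring

theorem hasDerivAt_polarVec {φ a b : ℝ → ℝ} {φ' a' b' t : ℝ} (hφ : HasDerivAt φ φ' t)
    (ha : HasDerivAt a a' t) (hb : HasDerivAt b b' t) :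
    HasDerivAt (fun s => polarVec (φ s) (a s) (b s))
      (polarVec (φ t) (a' - φ' * b t) (b' + φ' * a t)) t := by
  refine (((ha.fun_mul hφ.cos).fun_sub (hb.fun_mul hφ.sin)).prodMk
    ((ha.fun_mul hφ.sin).add (hb.fun_mul hφ.cos))).congr_deriv ?_
  simp only [polarVec, Prod.mk.injEq]
  constructor <;> ring

end PolarFrame

theorem HasDerivAt.div_sqrt_pow_three {f g : ℝ → ℝ} {f' g' x : ℝ} (hf : HasDerivAt f f' x)
    (hg : HasDerivAt g g' x) (hx : 0 < g x) :
    HasDerivAt (fun y => f y / √(g y) ^ 3)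
      ((f' * g x - 3 / 2 * f x * g') / (g x ^ 2 * √(g x))) x := by
  have hs : 0 < √(g x) := sqrt_pos.2 hx
  refine (hf.fun_div ((hg.sqrt hx.ne').fun_pow 3) (by simpa using hs.ne')).congr_deriv ?_
  have hsq : √(g x) ^ 2 = g x := sq_sqrt hx.le
  set r := √(g x)
  rw [← hsq]
  field_simp
  ring

noncomputable def spiralAngle (t : ℝ) : ℝ := exp (1 / t)

section Spiral

variable {t : ℝ}

theorem spiral_eq_polarVec (t : ℝ) : spiral t = polarVec (spiralAngle t) t 0 := by
  simp [spiral, polarVec, spiralAngle]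

theorem hasDerivAt_spiralAngle (ht : t ≠ 0) :
    HasDerivAt spiralAngle (-(spiralAngle t / t ^ 2)) t := by
  have h : HasDerivAt (fun s : ℝ => 1 / s) (-(1 / t ^ 2)) t := by
    simpa [one_div] using hasDerivAt_inv ht
  refine h.exp.congr_deriv ?_
  rw [spiralAngle]
  ring

theorem hasDerivAt_spiral_s11 (ht : t ≠ 0) :
    HasDerivAt spiral (polarVec (spiralAngle t) 1 (-(spiralAngle t / t))) t := by
  rw [show spiral = _ from funext spiral_eq_polarVec]
  refine (hasDerivAt_polarVec (hasDerivAt_spiralAngle ht) (hasDerivAt_id' t)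
    (hasDerivAt_const t 0)).congr_deriv ?_
  congr 1 <;> field_simp <;> ring

theorem hasDerivAt_neg_spiralAngle_div (ht : t ≠ 0) :
    HasDerivAt (fun s => -(spiralAngle s / s)) (spiralAngle t * (1 + t) / t ^ 3) t := by
  refine ((hasDerivAt_spiralAngle ht).fun_div (hasDerivAt_id' t) ht).fun_neg.congr_deriv ?_
  field_simp
  ring

theorem hasDerivAt_deriv_spiral (ht : t ≠ 0) :
    HasDerivAt (deriv spiral)
      (polarVec (spiralAngle t) (-(spiralAngle t ^ 2 / t ^ 3)) (spiralAngle t / t ^ 3)) t := by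
  have hev : deriv spiral =ᶠ[𝓝 t] fun s => polarVec (spiralAngle s) 1 (-(spiralAngle s / s)) :=
    (eventually_ne_nhds ht).mono fun s hs => (hasDerivAt_spiral_s11 hs).deriv
  refine ((hasDerivAt_polarVec (hasDerivAt_spiralAngle ht) (hasDerivAt_const t 1)
    (hasDerivAt_neg_spiralAngle_div ht)).congr_of_eventuallyEq hev).congr_deriv ?_
  congr 1 <;> field_simp <;> ring

theorem planarCross_deriv_spiral_Mhat (ht : t ≠ 0) :
    planarCross (deriv spiral t) (Mhat (spiral t) (deriv spiral t)) =
      1 - (spiralAngle t / t) ^ 2 := by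
  rw [(hasDerivAt_spiral_s11 ht).deriv, spiral_eq_polarVec, Mhat_polarVec ht, planarCross_polarVec]
  ring

theorem euclNorm_deriv_spiral (ht : t ≠ 0) :
    euclNorm (deriv spiral t) = √(1 + (spiralAngle t / t) ^ 2) := by
  rw [(hasDerivAt_spiral_s11 ht).deriv, euclNorm_polarVec]
  ring_nf

theorem spiralQ_eqOn : EqOn spiralQ
    (fun t => spiralAngle t * (t - spiralAngle t ^ 2) / t ^ 4 /
      √(1 + (spiralAngle t / t) ^ 2) ^ 3)
    (Ioi 0) := by
  intro t ht
  have ht₀ : t ≠ 0 := ne_of_gt ht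
  dsimp only
  rw [spiralQ, euclNorm_deriv_spiral ht₀, (hasDerivAt_deriv_spiral ht₀).deriv,
    (hasDerivAt_spiral_s11 ht₀).deriv, planarCross_polarVec]
  congr 1
  field_simp

theorem hasDerivAt_spiralQ (ht : 0 < t) :
    HasDerivAt spiralQ
      (spiralAngle t * (spiralAngle t ^ 4 + (4 * t ^ 2 + 3 * t + 2) * spiralAngle t ^ 2
          - t ^ 2 * (1 + 3 * t)) /
        (t ^ 7 * (1 + (spiralAngle t / t) ^ 2) ^ 2 * √(1 + (spiralAngle t / t) ^ 2))) t := by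
  have ht₀ : t ≠ 0 := ht.ne'
  have hθ := hasDerivAt_spiralAngle ht₀
  have hF : HasDerivAt (fun s => spiralAngle s * (s - spiralAngle s ^ 2) / s ^ 4)
      (spiralAngle t * ((3 + 4 * t) * spiralAngle t ^ 2 - t * (1 + 3 * t)) / t ^ 6) t := by
    refine ((hθ.fun_mul ((hasDerivAt_id' t).fun_sub (hθ.fun_pow 2))).fun_div (hasDerivAt_pow 4 t)
      (by positivity)).congr_deriv ?_
    field_simp
    ring
  have hg : HasDerivAt (fun s => 1 + (spiralAngle s / s) ^ 2)
      (-(2 * spiralAngle t ^ 2 * (1 + t) / t ^ 4)) t := by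
    refine (((hθ.fun_div (hasDerivAt_id' t) ht₀).fun_pow 2).const_add 1).congr_deriv ?_
    simp only [Nat.reduceSub, pow_one, Nat.cast_ofNat]
    field_simp
    ring
  refine ((hF.div_sqrt_pow_three hg (by positivity)).congr_of_eventuallyEq
    (spiralQ_eqOn.eventuallyEq_of_mem (Ioi_mem_nhds ht))).congr_deriv ?_
  field_simp
  ring

end Spiral

theorem expNegInvGlue_le_div {t : ℝ} (ht : 0 ≤ t) : expNegInvGlue t ≤ t / (t + 1) := by
  rcases ht.eq_or_lt with rfl | ht
  · simp [expNegInvGlue.zero]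
  rw [expNegInvGlue, if_neg ht.not_ge, exp_neg, inv_le_comm₀ (exp_pos _) (by positivity)]
  calc (t / (t + 1))⁻¹ = t⁻¹ + 1 := by field_simp; ring
    _ ≤ exp t⁻¹ := add_one_le_exp _

/-- Equals `t e^{-1/t} = t/θ` on `(0, 1]`; the cutoff beyond `3/2` keeps it below `1`. -/
noncomputable def spiralRatio (t : ℝ) : ℝ := t * smoothTransition (3 - 2 * t) * expNegInvGlue t

theorem spiralRatio_nonneg (t : ℝ) : 0 ≤ spiralRatio t := by
  rcases le_or_gt t 0 with ht | ht
  · simp [spiralRatio, expNegInvGlue.zero_of_nonpos ht]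
  · exact mul_nonneg (mul_nonneg ht.le (smoothTransition.nonneg _)) (expNegInvGlue.nonneg t)

theorem spiralRatio_lt_one (t : ℝ) : spiralRatio t < 1 := by
  rcases le_or_gt t 0 with ht | ht
  · simp [spiralRatio, expNegInvGlue.zero_of_nonpos ht]
  rcases le_or_gt (3 / 2) t with ht' | ht'
  · simp [spiralRatio, smoothTransition.zero_of_nonpos (by linarith : 3 - 2 * t ≤ 0)]
  calc spiralRatio t ≤ t * 1 * (t / (t + 1)) := by
        unfold spiralRatio
        gcongr
        exacts [expNegInvGlue.nonneg t, smoothTransition.le_one _, expNegInvGlue_le_div ht.le]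
    _ < 1 := by
        rw [mul_one, mul_div_assoc', div_lt_one (by positivity)]
        nlinarith

theorem spiralRatio_eq {t : ℝ} (ht : t ≤ 1) :
    spiralRatio t = t * expNegInvGlue t := by
  rw [spiralRatio, smoothTransition.one_of_one_le (by linarith), mul_one]

/-- `Q'‖γ'‖/cross(γ', M̂γ')` rewritten in `v = e^{-1/t}` and `w = t v`. -/
noncomputable def spiralCoeff (t : ℝ) : ℝ :=
  t⁻¹ * expNegInvGlue t *
      (1 + (4 * t ^ 2 + 3 * t + 2) * expNegInvGlue t ^ 2 -
        t ^ 2 * (1 + 3 * t) * expNegInvGlue t ^ 4) /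
    ((spiralRatio t ^ 2 + 1) ^ 2 * (spiralRatio t ^ 2 - 1))

theorem contDiff_spiralCoeff : ContDiff ℝ (⊤ : ℕ∞) spiralCoeff := by
  have hinv : ContDiff ℝ (⊤ : ℕ∞) fun t : ℝ => t⁻¹ * expNegInvGlue t := by
    simpa using
      expNegInvGlue.contDiff_polynomial_eval_inv_mul (n := (⊤ : ℕ∞)) (Polynomial.X (R := ℝ))
  have hglue : ContDiff ℝ (⊤ : ℕ∞) expNegInvGlue := expNegInvGlue.contDiff
  have hratio : ContDiff ℝ (⊤ : ℕ∞) spiralRatio :=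
    (contDiff_id.mul (smoothTransition.contDiff.comp (by fun_prop))).mul hglue
  refine (hinv.mul (by fun_prop)).div (by fun_prop) fun t => ?_
  have h₀ := spiralRatio_nonneg t
  have h₁ := spiralRatio_lt_one t
  have : spiralRatio t ^ 2 - 1 < 0 := by nlinarith
  exact mul_ne_zero (by positivity) this.ne

theorem spiralCoeff_of_nonpos {t : ℝ} (ht : t ≤ 0) : spiralCoeff t = 0 := by
  simp [spiralCoeff, expNegInvGlue.zero_of_nonpos ht]

theorem expNegInvGlue_eq_inv_spiralAngle {t : ℝ} (ht : 0 < t) :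
    expNegInvGlue t = (spiralAngle t)⁻¹ := by
  rw [expNegInvGlue, if_neg ht.not_ge, spiralAngle, one_div, exp_neg]

theorem lt_spiralAngle {t : ℝ} (ht₀ : 0 < t) (ht₁ : t ≤ 1) : t < spiralAngle t := by
  have h := add_one_le_exp (1 / t)
  have : 0 < 1 / t := by positivity
  rw [spiralAngle]
  linarith

theorem spiralCoeff_eq {t : ℝ} (ht₀ : 0 < t) (ht₁ : t ≤ 1) :
    spiralCoeff t = spiralAngle t * (spiralAngle t ^ 4 + (4 * t ^ 2 + 3 * t + 2) * spiralAngle t ^ 2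
        - t ^ 2 * (1 + 3 * t)) /
      (t * (t ^ 2 + spiralAngle t ^ 2) ^ 2 * (t ^ 2 - spiralAngle t ^ 2)) := by
  have hθ : 0 < spiralAngle t := exp_pos _
  have hlt := lt_spiralAngle ht₀ ht₁
  have hne : t ^ 2 - spiralAngle t ^ 2 ≠ 0 := by nlinarith
  rw [spiralCoeff, spiralRatio_eq ht₁, expNegInvGlue_eq_inv_spiralAngle ht₀]
  field_simp

/-- There is a function `k`, smooth on `ℝ` and vanishing identically on `(-∞, 0]`, such that
for every `t ∈ (0, 1]`:
`Q'(t) = k(t) · cross(γ'(t), M̂_{γ(t)} γ'(t)) / ‖γ'(t)‖`. -/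
theorem stmt_11 :
    ∃ k : ℝ → ℝ, ContDiff ℝ (⊤ : ℕ∞) k ∧ (∀ t ≤ (0 : ℝ), k t = 0) ∧
      ∀ t ∈ Set.Ioc (0 : ℝ) 1,
        deriv spiralQ t =
          k t * planarCross (deriv spiral t) (Mhat (spiral t) (deriv spiral t)) /
            euclNorm (deriv spiral t) := by
  refine ⟨spiralCoeff, contDiff_spiralCoeff, fun t ht => spiralCoeff_of_nonpos ht, ?_⟩
  rintro t ⟨ht₀, ht₁⟩
  have hθ : 0 < spiralAngle t := exp_pos _
  have hne : t ^ 2 - spiralAngle t ^ 2 ≠ 0 := by nlinarith [lt_spiralAngle ht₀ ht₁]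
  rw [(hasDerivAt_spiralQ ht₀).deriv, planarCross_deriv_spiral_Mhat ht₀.ne',
    euclNorm_deriv_spiral ht₀.ne', spiralCoeff_eq ht₀ ht₁]
  field_simp
end
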